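/- Let n ≥ 1, let J : Fin n → Fin n → ℝ be symmetric with zero diagonal (J p q = J q p and J p p = 0), and let L be a subset of Fin n. Define J̃ p q = −J p q if exactly one of p, q lies in L, and J̃ p q = J p q otherwise. Let H(J) be the diagonal 2^n × 2^n matrix whose (x,x)-entry is Σ_{p<q} J p q · (−1)^{x_p + x_q}, and let B = Σ_{j} X_j. For P ≥ 1 and β, γ ∈ ℝ^P, let Ψ_J(β,γ) = (∏_{k=1}^{P} exp(i β_k B) exp(i γ_k H(J))) |+^n⟩. Then: (a) for all P, β, γ, ⟨Ψ_{J̃}(β,γ), H(J̃) Ψ_{J̃}(β,γ)⟩ = ⟨Ψ_J(β,γ), H(J) Ψ_J(β,γ)⟩; and (b) the maximum over x : Fin n → Bool of the (x,x)-entry of H(J̃) equals the maximum over x of the (x,x)-entry of H(J). -/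

import Mathlib

open Matrix

/-- The single-qubit Pauli-X operator on qubit `j`: the permutation matrix flipping bit `j`. -/
noncomputable def XopF {n : ℕ} (j : Fin n) : Matrix (Fin n → Bool) (Fin n → Bool) ℂ :=
  Matrix.of (fun x y => if y = Function.update x j (! x j) then 1 else 0)

/-- The transverse-field operator `B = ∑_j X_j`. -/
noncomputable def Bop (n : ℕ) : Matrix (Fin n → Bool) (Fin n → Bool) ℂ :=
  ∑ j : Fin n, XopF j

/-- The classical Ising cost: the `(x,x)`-entry `∑_{p<q} J p q · (−1)^{x_p+x_q}` of `H(J)`. -/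
def isingCost {n : ℕ} (J : Fin n → Fin n → ℝ) (x : Fin n → Bool) : ℝ :=
  ∑ p : Fin n, ∑ q : Fin n, if p < q then J p q * (if x p = x q then 1 else -1) else 0

/-- The Ising Hamiltonian `H(J) = ∑_{p<q} J_{p,q} Z_p Z_q` as a diagonal matrix. -/
noncomputable def isingHam {n : ℕ} (J : Fin n → Fin n → ℝ) :
    Matrix (Fin n → Bool) (Fin n → Bool) ℂ :=
  Matrix.diagonal (fun x => ((isingCost J x : ℝ) : ℂ))

/-- The state `|+^n⟩`: all entries equal to `2^{-n/2}`. -/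
noncomputable def plusF (n : ℕ) : (Fin n → Bool) → ℂ :=
  fun _ => ((1 / Real.sqrt (2 ^ n) : ℝ) : ℂ)

/-- The level-`P` QAOA state `(∏_{k=1}^P e^{iβ_k B} e^{iγ_k H(J)}) |+^n⟩`,
with the `k = 1` factor applied last (leftmost). -/
noncomputable def qaoaState {n : ℕ} (J : Fin n → Fin n → ℝ) (P : ℕ) (β γ : Fin P → ℝ) :
    (Fin n → Bool) → ℂ :=
  (((List.finRange P).map
      (fun k =>
        NormedSpace.exp ((Complex.I * ((β k : ℝ) : ℂ)) • Bop n) *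
        NormedSpace.exp ((Complex.I * ((γ k : ℝ) : ℂ)) • isingHam J))).prod).mulVec
    (plusF n)

/-!
Let `σ = X̄[L]` be the bit flip `x ↦ x ⊕ 1_L` of basis states; conjugation by its permutation
matrix is the relabelling `M ↦ M.submatrix σ σ`. Flipping the bits in `L` changes the sign of
`(−1)^{x_p + x_q}` exactly when one of `p, q` lies in `L`, so the cost of `J̃` is the cost of `J`
composed with `σ` and `H(J̃)` is the relabelled `H(J)`. Each `X_j` commutes with `σ`, so `B` is fixed; relabelling is a continuous
algebra automorphism, hence commutes with `exp` and with the ordered product, and `|+^n⟩` is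
constant. Thus `Ψ_{J̃} = Ψ_J ∘ σ`, and both the energy and the maximal cost are invariant under
relabelling by a bijection.
-/

theorem Matrix.exp_submatrix_equiv {ι κ 𝕜 : Type*} [Fintype ι] [DecidableEq ι] [Fintype κ]
    [DecidableEq κ] [RCLike 𝕜] (A : Matrix ι ι 𝕜) (σ : κ ≃ ι) :
    NormedSpace.exp (A.submatrix σ σ) = (NormedSpace.exp A).submatrix σ σ := by
  open scoped Norms.Operator in
  exact (NormedSpace.map_exp (reindexAlgEquiv 𝕜 𝕜 σ.symm)
    (continuous_id.matrix_submatrix _ _) A).symm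

theorem Matrix.star_comp_dotProduct_submatrix_mulVec_comp {ι κ R : Type*} [Fintype ι] [Fintype κ]
    [CommSemiring R] [StarRing R] (A : Matrix ι ι R) (ψ : ι → R) (σ : κ ≃ ι) :
    star (ψ ∘ σ : κ → R) ⬝ᵥ (A.submatrix σ σ *ᵥ (ψ ∘ σ)) = star ψ ⬝ᵥ (A *ᵥ ψ) := by
  rw [submatrix_mulVec_equiv A (ψ ∘ σ) (σ : κ → ι) σ, Function.comp_assoc, σ.self_comp_symm,
    Function.comp_id]
  exact comp_equiv_dotProduct_comp_equiv (star ψ) (A *ᵥ ψ) σ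

theorem Finset.sup'_univ_comp_equiv {ι κ α : Type*} [Fintype ι] [Fintype κ] [SemilatticeSup α]
    (f : ι → α) (σ : κ ≃ ι) (hκ : (univ : Finset κ).Nonempty) (hι : (univ : Finset ι).Nonempty) :
    univ.sup' hκ (f ∘ σ) = univ.sup' hι f :=
  (sup'_comp_eq_map (f := σ.toEmbedding) f hκ).trans
    (sup'_congr _ (map_univ_equiv σ) fun _ _ => rfl)

section

variable {n : ℕ}

def flipBits (L : Finset (Fin n)) : Equiv.Perm (Fin n → Bool) :=
  Function.Involutive.toPerm (fun x j => xor (decide (j ∈ L)) (x j)) fun x => by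
    funext j; simp

@[simp]
theorem flipBits_apply (L : Finset (Fin n)) (x : Fin n → Bool) (j : Fin n) :
    flipBits L x j = xor (decide (j ∈ L)) (x j) := rfl

theorem flipBits_update_not (L : Finset (Fin n)) (x : Fin n → Bool) (j : Fin n) :
    flipBits L (Function.update x j (!x j)) =
      Function.update (flipBits L x) j (!flipBits L x j) := by
  funext k
  rcases eq_or_ne k j with rfl | hk
  · simp
  · simp [hk]

def gaugeTransform (L : Finset (Fin n)) (J : Fin n → Fin n → ℝ) : Fin n → Fin n → ℝ :=
  fun p q => if p ∈ L ↔ q ∈ L then J p q else -J p q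

theorem isingCost_gaugeTransform (L : Finset (Fin n)) (J : Fin n → Fin n → ℝ) :
    isingCost (gaugeTransform L J) = isingCost J ∘ flipBits L := by
  funext x
  refine Finset.sum_congr rfl fun p _ => Finset.sum_congr rfl fun q _ => ?_
  by_cases hp : p ∈ L <;> by_cases hq : q ∈ L <;> cases hxp : x p <;> cases hxq : x q <;>
    simp [gaugeTransform, hp, hq, hxp, hxq]

theorem isingHam_gaugeTransform (L : Finset (Fin n)) (J : Fin n → Fin n → ℝ) :
    isingHam (gaugeTransform L J) = (isingHam J).submatrix (flipBits L) (flipBits L) := by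
  simp only [isingHam, submatrix_diagonal_equiv, isingCost_gaugeTransform]
  rfl

theorem XopF_submatrix_flipBits (L : Finset (Fin n)) (j : Fin n) :
    (XopF j).submatrix (flipBits L) (flipBits L) = XopF j := by
  ext x y
  simp only [XopF, submatrix_apply, of_apply, ← flipBits_update_not,
    (flipBits L).injective.eq_iff]

theorem Bop_submatrix_flipBits (L : Finset (Fin n)) :
    (Bop n).submatrix (flipBits L) (flipBits L) = Bop n := by
  ext x y
  simp only [Bop, submatrix_apply, Matrix.sum_apply]
  exact Finset.sum_congr rfl fun j _ => congrFun (congrFun (XopF_submatrix_flipBits L j) x) y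

noncomputable def qaoaLayer (J : Fin n → Fin n → ℝ) (b g : ℝ) :
    Matrix (Fin n → Bool) (Fin n → Bool) ℂ :=
  NormedSpace.exp ((Complex.I * (b : ℂ)) • Bop n) *
    NormedSpace.exp ((Complex.I * (g : ℂ)) • isingHam J)

theorem qaoaState_eq_prod_qaoaLayer (J : Fin n → Fin n → ℝ) (P : ℕ) (β γ : Fin P → ℝ) :
    qaoaState J P β γ =
      ((List.finRange P).map fun k => qaoaLayer J (β k) (γ k)).prod *ᵥ plusF n := rfl

theorem qaoaLayer_gaugeTransform (L : Finset (Fin n)) (J : Fin n → Fin n → ℝ) (b g : ℝ) :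
    qaoaLayer (gaugeTransform L J) b g =
      reindexAlgEquiv ℂ ℂ (flipBits L).symm (qaoaLayer J b g) := by
  set φ := reindexAlgEquiv ℂ ℂ (flipBits L).symm
  have hexp : ∀ A, φ (NormedSpace.exp A) = NormedSpace.exp (φ A) := fun A =>
    (exp_submatrix_equiv A (flipBits L)).symm
  have hB : φ (Bop n) = Bop n := Bop_submatrix_flipBits L
  have hH : φ (isingHam J) = isingHam (gaugeTransform L J) :=
    (isingHam_gaugeTransform L J).symm
  rw [qaoaLayer, qaoaLayer, map_mul, hexp, hexp, map_smul, map_smul, hB, hH]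

theorem qaoaState_gaugeTransform (L : Finset (Fin n)) (J : Fin n → Fin n → ℝ) (P : ℕ)
    (β γ : Fin P → ℝ) :
    qaoaState (gaugeTransform L J) P β γ = qaoaState J P β γ ∘ flipBits L := by
  have hprod :
      ((List.finRange P).map fun k => qaoaLayer (gaugeTransform L J) (β k) (γ k)).prod =
      reindexAlgEquiv ℂ ℂ (flipBits L).symm
        ((List.finRange P).map fun k => qaoaLayer J (β k) (γ k)).prod := by
    rw [map_list_prod, List.map_map]
    exact congrArg List.prod (List.map_congr_left fun k _ => qaoaLayer_gaugeTransform L J _ _)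
  rw [qaoaState_eq_prod_qaoaLayer, qaoaState_eq_prod_qaoaLayer, hprod, coe_reindexAlgEquiv,
    reindex_apply, submatrix_mulVec_equiv]
  -- `plusF n` is constant, hence fixed by the relabelling
  rfl

end

theorem stmt10_general (n : ℕ)
    (J : Fin n → Fin n → ℝ)
    (L : Finset (Fin n))
    (Jt : Fin n → Fin n → ℝ)
    (hJt : ∀ p q, Jt p q = if (p ∈ L) ↔ (q ∈ L) then J p q else -J p q) :
    (∀ (P : ℕ), 1 ≤ P → ∀ β γ : Fin P → ℝ,
      star (qaoaState Jt P β γ) ⬝ᵥ (isingHam Jt).mulVec (qaoaState Jt P β γ) =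
      star (qaoaState J P β γ) ⬝ᵥ (isingHam J).mulVec (qaoaState J P β γ)) ∧
    Finset.univ.sup' Finset.univ_nonempty (isingCost Jt) =
      Finset.univ.sup' Finset.univ_nonempty (isingCost J) := by
  obtain rfl : Jt = gaugeTransform L J := funext fun p => funext (hJt p)
  refine ⟨fun P _ β γ => ?_, ?_⟩
  · rw [qaoaState_gaugeTransform, isingHam_gaugeTransform]
    exact star_comp_dotProduct_submatrix_mulVec_comp _ _ _
  · simp only [isingCost_gaugeTransform]
    exact Finset.sup'_univ_comp_equiv _ _ _ _

theorem stmt10 (n : ℕ) (hn : 1 ≤ n)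
    (J : Fin n → Fin n → ℝ)
    (hJsymm : ∀ p q, J p q = J q p) (hJdiag : ∀ p, J p p = 0)
    (L : Finset (Fin n))
    (Jt : Fin n → Fin n → ℝ)
    (hJt : ∀ p q, Jt p q = if (p ∈ L) ↔ (q ∈ L) then J p q else -J p q) :
    (∀ (P : ℕ), 1 ≤ P → ∀ β γ : Fin P → ℝ,
      star (qaoaState Jt P β γ) ⬝ᵥ (isingHam Jt).mulVec (qaoaState Jt P β γ) =
      star (qaoaState J P β γ) ⬝ᵥ (isingHam J).mulVec (qaoaState J P β γ)) ∧
    Finset.univ.sup' Finset.univ_nonempty (isingCost Jt) =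
      Finset.univ.sup' Finset.univ_nonempty (isingCost J) :=
  stmt10_general n J L Jt hJt
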